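/- Let $n \ge 2$, let $l \mid n$ with $1 \le l < n$, and let $u \in M_n(\mathbb{C})$ be the cyclic permutation unitary. Then the C*-subalgebra (equivalently, the unital *-subalgebra) of $M_n(\mathbb{C})$ generated by the diagonal matrix units $e_{11}, \dots, e_{nn}$ together with $u^l$ is *-isomorphic to the direct sum of $l$ copies of $M_{n/l}(\mathbb{C})$. -/

import Mathlib

open Matrix

/-- The cyclic permutation unitary in `Mₙ(ℂ)`. -/
def cyclicShift (n : ℕ) [NeZero n] : Matrix (Fin n) (Fin n) ℂ :=
  Matrix.of fun i j => if j = i + 1 then 1 else 0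

/-!
Write `n = m * l` and index `Fin n` by pairs `(q, r) ∈ Fin m × Fin l` via `i = r + l * q`.
In these coordinates `u ^ l` sends the basis vector at `(q, r)` to the one at `(q + 1, r)`, so
it is block diagonal with `l` copies of the cyclic shift of size `m`, and each diagonal matrix
unit is a diagonal matrix unit of one block. Hence the algebra generated lies in the image of the
block-diagonal embedding of `Fin l → Mₘ(ℂ)`. Conversely, in `Mₘ(ℂ)` one has
`e_pq = e_pp * shift ^ (q - p)`, so the generators of each block already give all its matrix
units, and the algebra generated is the whole image.
-/

open Fin.NatCast

namespace Matrix

variable {R m l ι : Type*} [CommSemiring R] [StarRing R]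
  [Fintype m] [DecidableEq m] [Fintype l] [DecidableEq l] [Fintype ι] [DecidableEq ι]

def blockDiagonalReindex (e : m × l ≃ ι) :
    (l → Matrix m m R) →⋆ₐ[R] Matrix ι ι R where
  toFun A := reindex e e (blockDiagonal A)
  map_one' := by simp
  map_mul' A B := by simp only [reindex_apply, submatrix_mul_equiv, ← blockDiagonal_mul]; rfl
  map_zero' := by simp
  map_add' A B := by simp [blockDiagonal_add, submatrix_add]
  commutes' c := by simp [Algebra.algebraMap_eq_smul_one, blockDiagonal_smul, submatrix_smul]
  map_star' A := by
    simp only [reindex_apply, star_eq_conjTranspose, conjTranspose_submatrix,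
      blockDiagonal_conjTranspose]
    rfl

variable (e : m × l ≃ ι)

theorem blockDiagonalReindex_injective :
    Function.Injective (blockDiagonalReindex e : (l → Matrix m m R) → Matrix ι ι R) :=
  (reindex e e).injective.comp blockDiagonal_injective

theorem blockDiagonalReindex_apply (A : l → Matrix m m R) (p q : m) (r s : l) :
    blockDiagonalReindex e A (e (p, r)) (e (q, s)) = if r = s then A r p q else 0 := by
  simp [blockDiagonalReindex, blockDiagonal_apply]

theorem blockDiagonalReindex_single (r : l) (p q : m) (c : R) :
    blockDiagonalReindex e (Pi.single r (single p q c)) = single (e (p, r)) (e (q, r)) c := by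
  ext i j
  obtain ⟨⟨a, b⟩, rfl⟩ := e.surjective i
  obtain ⟨⟨a', b'⟩, rfl⟩ := e.surjective j
  rw [blockDiagonalReindex_apply]
  rcases eq_or_ne b r with rfl | hb
  · by_cases hb' : b = b' <;> aesop (add simp single_apply)
  · simp [hb, Ne.symm hb]

end Matrix

theorem cyclicShift_apply (n : ℕ) [NeZero n] (i j : Fin n) :
    cyclicShift n i j = if j = i + 1 then 1 else 0 := rfl

theorem cyclicShift_pow_apply (n : ℕ) [NeZero n] (k : ℕ) (i j : Fin n) :
    (cyclicShift n ^ k) i j = if j = i + k then 1 else 0 := by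
  induction k generalizing j with
  | zero => simp [one_apply, eq_comm]
  | succ k ih =>
    rw [pow_succ, mul_apply, Finset.sum_eq_single (j - 1)]
    · simp [ih, cyclicShift_apply, sub_eq_iff_eq_add, add_assoc]
    · rintro b - hb
      rw [cyclicShift_apply, if_neg (fun h => hb (by rw [h, add_sub_cancel_right])), mul_zero]
    · simp

theorem single_one_mul_cyclicShift_pow (n : ℕ) [NeZero n] (p : Fin n) (k : ℕ) :
    single p p (1 : ℂ) * cyclicShift n ^ k = single p (p + k) 1 := by
  ext i j
  rcases eq_or_ne i p with rfl | hi
  · simp [cyclicShift_pow_apply, single_apply, eq_comm]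
  · simp [hi, Ne.symm hi]

theorem finProdFinEquiv_add_natCast {m l n : ℕ} [NeZero m] [NeZero n] (h : m * l = n)
    (q : Fin m) (r : Fin l) :
    finCongr h (finProdFinEquiv (q, r)) + (l : Fin n) =
      finCongr h (finProdFinEquiv (q + 1, r)) := by
  ext
  simp only [Fin.val_add, finCongr_apply, Fin.val_cast, finProdFinEquiv_apply_val,
    Fin.val_natCast, Fin.val_one']
  rw [Nat.add_mod_mod, ← h, mul_comm m, add_assoc, ← mul_add_one, Nat.mod_mul,
    Nat.add_mul_mod_self_left, Nat.add_mul_div_left _ _ r.pos, Nat.mod_eq_of_lt r.isLt,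
    Nat.div_eq_of_lt r.isLt, zero_add, Nat.add_mod_mod]

theorem blockDiagonalReindex_cyclicShift {m l n : ℕ} [NeZero m] [NeZero n] (h : m * l = n) :
    blockDiagonalReindex (finProdFinEquiv.trans (finCongr h)) (fun _ => cyclicShift m) =
      cyclicShift n ^ l := by
  set e := finProdFinEquiv.trans (finCongr h)
  ext i j
  obtain ⟨⟨p, r⟩, rfl⟩ := e.surjective i
  obtain ⟨⟨q, s⟩, rfl⟩ := e.surjective j
  have hshift : e (p, r) + l = e (p + 1, r) := finProdFinEquiv_add_natCast h p r
  rw [blockDiagonalReindex_apply, cyclicShift_pow_apply, cyclicShift_apply, hshift]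
  by_cases hrs : r = s <;> simp [hrs, eq_comm]

theorem adjoin_single_and_const_cyclicShift_eq_top (m l : ℕ) [NeZero m] :
    StarAlgebra.adjoin ℂ ({x | ∃ (r : Fin l) (p : Fin m), x = Pi.single r (single p p 1)} ∪
      {fun _ => cyclicShift m}) = ⊤ := by
  set T : Set (Fin l → Matrix (Fin m) (Fin m) ℂ) :=
    {x | ∃ (r : Fin l) (p : Fin m), x = Pi.single r (single p p 1)} ∪ {fun _ => cyclicShift m}
  have hunit (r : Fin l) (p q : Fin m) :
      Pi.single r (single p q 1) ∈ StarAlgebra.adjoin ℂ T := by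
    have hpq : p + ((q - p : Fin m).val : Fin m) = q := by
      rw [Fin.cast_val_eq_self, add_sub_cancel]
    have hfactor : Pi.single r (single p q (1 : ℂ)) =
        Pi.single r (single p p 1) * (fun _ => cyclicShift m) ^ (q - p : Fin m).val := by
      rw [← Pi.single_mul_left, Pi.pow_apply, single_one_mul_cyclicShift_pow, hpq]
    rw [hfactor]
    exact mul_mem (StarAlgebra.subset_adjoin ℂ T (Or.inl ⟨r, p, rfl⟩))
      (pow_mem (StarAlgebra.subset_adjoin ℂ T (Or.inr rfl)) _)
  refine eq_top_iff.mpr fun A _ => ?_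
  have hA : A = ∑ r, ∑ p, ∑ q, A r p q • Pi.single r (single p q 1) := by
    ext r i j
    simp [Finset.sum_apply, Pi.single_apply, ← matrix_eq_sum_single]
  rw [hA]
  exact sum_mem fun r _ => sum_mem fun p _ => sum_mem fun q _ =>
    SMulMemClass.smul_mem _ (hunit r p q)


theorem adjoin_single_and_cyclicShift_pow_eq_range {m l n : ℕ} [NeZero m] [NeZero n]
    (h : m * l = n) :
    StarAlgebra.adjoin ℂ ({x | ∃ i : Fin n, x = single i i 1} ∪ {cyclicShift n ^ l}) =
      (blockDiagonalReindex (finProdFinEquiv.trans (finCongr h))).range := by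
  set e := finProdFinEquiv.trans (finCongr h)
  apply le_antisymm
  · apply StarAlgebra.adjoin_le
    rintro x (⟨i, rfl⟩ | rfl)
    · obtain ⟨⟨p, r⟩, rfl⟩ := e.surjective i
      exact ⟨Pi.single r (single p p 1), blockDiagonalReindex_single e r p p 1⟩
    · exact ⟨_, blockDiagonalReindex_cyclicShift h⟩
  · rw [StarAlgHom.range_eq_map_top, ← adjoin_single_and_const_cyclicShift_eq_top,
      StarAlgHom.map_adjoin]
    apply StarAlgebra.adjoin_mono
    rintro _ ⟨x, ⟨r, p, rfl⟩ | rfl, rfl⟩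
    · exact Or.inl ⟨e (p, r), blockDiagonalReindex_single e r p p 1⟩
    · exact Or.inr (blockDiagonalReindex_cyclicShift h)

theorem starSubalgebra_diag_and_shift_iso_general (n l : ℕ) [NeZero n]
    (hl : l ∣ n)
    (u : Matrix (Fin n) (Fin n) ℂ) (hu : u = cyclicShift n)
    (S : Set (Matrix (Fin n) (Fin n) ℂ))
    (hS : S = {x | ∃ i : Fin n, x = Matrix.single i i 1} ∪ {u ^ l}) :
    Nonempty ((StarAlgebra.adjoin ℂ S) ≃⋆ₐ[ℂ]
      (Fin l → Matrix (Fin (n / l)) (Fin (n / l)) ℂ)) := by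
  subst hu hS
  have h : n / l * l = n := Nat.div_mul_cancel hl
  have : NeZero (n / l) := ⟨fun h0 => NeZero.ne n (by rw [← h, h0, zero_mul])⟩
  rw [adjoin_single_and_cyclicShift_pow_eq_range h]
  exact ⟨(StarAlgEquiv.ofInjective _ (blockDiagonalReindex_injective _)).symm⟩

/-- Let `n ≥ 2` and `l ∣ n` with `1 ≤ l < n`, and let `u` be the cyclic permutation
unitary.  The (automatically closed, hence C*-) unital *-subalgebra of `Mₙ(ℂ)` generated
by the diagonal matrix units `e₁₁, …, eₙₙ` together with `u^l` is *-isomorphic to the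
direct sum of `l` copies of `M_{n/l}(ℂ)`. -/
theorem starSubalgebra_diag_and_shift_iso (n l : ℕ) [NeZero n] (hn : 2 ≤ n)
    (hl : l ∣ n) (hl1 : 1 ≤ l) (hln : l < n)
    (u : Matrix (Fin n) (Fin n) ℂ) (hu : u = cyclicShift n)
    (S : Set (Matrix (Fin n) (Fin n) ℂ))
    (hS : S = {x | ∃ i : Fin n, x = Matrix.single i i 1} ∪ {u ^ l}) :
    Nonempty ((StarAlgebra.adjoin ℂ S) ≃⋆ₐ[ℂ]
      (Fin l → Matrix (Fin (n / l)) (Fin (n / l)) ℂ)) :=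
  starSubalgebra_diag_and_shift_iso_general n l hl u hu S hS
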